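/- (Upper bound on the market failure probability.) For every ε > 0, P(|τ_i − τ_j| < ε for some pair (i,j) with 1 ≤ i, j ≤ K, i ≠ j) ≤ C(K,2) − Σ_{i=1}^{K} Σ_{j≠i} ∫_0^∞ α_i(x) exp(−A_i(x) − A_j(x+ε) − A_0(x+ε)) dx, where C(K,2) = K(K−1)/2 is the binomial coefficient. -/

import Mathlib

/-!
For `i ≠ j` the events `|τ_i - τ_j| < ε`, `τ_i + ε ≤ τ_j` and `τ_j + ε ≤ τ_i` are
disjoint, so a union bound over the `C(K,2)` unordered pairs reduces the claim to
`P(τ_i + ε ≤ τ_j) ≥ ∫_0^∞ α_i(x) e^{-A_i(x) - A_j(x+ε) - A_0(x+ε)} dx`. That event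
contains `{Z_j ≥ A_j(η_i + ε), Z_0 ≥ A_0(η_i + ε)}`; integrating first over the independent
pair `(Z_j, Z_0)` and then over `Z_i`, with the substitution `Z_i = A_i(x)`, gives the integral.
-/

open MeasureTheory ProbabilityTheory

/-- The cumulative hazard `A(t) = ∫_0^t α(s) ds`. -/
noncomputable def cumHaz (α : ℝ → ℝ) (t : ℝ) : ℝ := ∫ s in (0:ℝ)..t, α s

/-- The first time `s ≥ 0` at which the cumulative hazard reaches level `z`,
i.e. `inf {s ≥ 0 : A(s) ≥ z}`. -/
noncomputable def hitTime (α : ℝ → ℝ) (z : ℝ) : ℝ :=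
  sInf {s : ℝ | 0 ≤ s ∧ z ≤ cumHaz α s}

open Set Filter
open scoped ENNReal

structure IsHazardRate (α : ℝ → ℝ) : Prop where
  pos : ∀ t, 0 ≤ t → 0 < α t
  continuousOn : ContinuousOn α (Ici 0)
  tendsto_cumHaz : Tendsto (cumHaz α) atTop atTop

section CumulativeHazard

variable {α : ℝ → ℝ}

theorem intervalIntegrable_of_continuousOn_Ici (hα : ContinuousOn α (Ici 0)) {s t : ℝ}
    (hs : 0 ≤ s) (ht : 0 ≤ t) : IntervalIntegrable α volume s t :=
  (hα.mono fun _ hx => (le_inf hs ht).trans hx.1).intervalIntegrable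

theorem hasDerivAt_cumHaz (hα : ContinuousOn α (Ici 0)) {x : ℝ} (hx : 0 < x) :
    HasDerivAt (cumHaz α) (α x) x :=
  intervalIntegral.integral_hasDerivAt_right
    (intervalIntegrable_of_continuousOn_Ici hα le_rfl hx.le)
    ((hα.mono Ioi_subset_Ici_self).stronglyMeasurableAtFilter_nhdsWithin measurableSet_Ioi x
      |>.filter_mono (nhdsWithin_eq_nhds.2 (Ioi_mem_nhds hx)).ge)
    ((hα x hx.le).continuousAt (Ici_mem_nhds hx))

theorem strictMonoOn_cumHaz (hpos : ∀ t, 0 ≤ t → 0 < α t) (hα : ContinuousOn α (Ici 0)) :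
    StrictMonoOn (cumHaz α) (Ici 0) := by
  intro s hs t ht hst
  have hsub : cumHaz α t - cumHaz α s = ∫ x in s..t, α x :=
    intervalIntegral.integral_interval_sub_left
      (intervalIntegrable_of_continuousOn_Ici hα le_rfl ht)
      (intervalIntegrable_of_continuousOn_Ici hα le_rfl hs)
  have hpos' : 0 < ∫ x in s..t, α x :=
    intervalIntegral.intervalIntegral_pos_of_pos_on
      (intervalIntegrable_of_continuousOn_Ici hα hs ht)
      (fun x hx => hpos x (le_trans hs hx.1.le)) hst
  linarith

theorem cumHaz_pos (hpos : ∀ t, 0 ≤ t → 0 < α t) (hα : ContinuousOn α (Ici 0)) {x : ℝ}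
    (hx : 0 < x) : 0 < cumHaz α x := by
  simpa [cumHaz] using strictMonoOn_cumHaz hpos hα (mem_Ici.2 le_rfl) hx.le hx

theorem cumHaz_nonneg (hpos : ∀ t, 0 ≤ t → 0 < α t) {t : ℝ} (ht : 0 ≤ t) :
    0 ≤ cumHaz α t :=
  intervalIntegral.integral_nonneg ht fun x hx => (hpos x hx.1).le

theorem lintegral_comp_cumHaz_le (hpos : ∀ t, 0 ≤ t → 0 < α t)
    (hα : ContinuousOn α (Ici 0)) (u : ℝ → ℝ≥0∞) :
    ∫⁻ x in Ioi 0, ENNReal.ofReal (α x) * u (cumHaz α x) ≤ ∫⁻ z in Ioi 0, u z := by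
  rw [← lintegral_image_eq_lintegral_deriv_mul_of_monotoneOn measurableSet_Ioi
    (fun x hx => (hasDerivAt_cumHaz hα hx).hasDerivWithinAt)
    ((strictMonoOn_cumHaz hpos hα).monotoneOn.mono Ioi_subset_Ici_self)]
  exact lintegral_mono_set (image_subset_iff.2 fun x hx => cumHaz_pos hpos hα hx)

theorem hitTime_nonneg (α : ℝ → ℝ) (z : ℝ) : 0 ≤ hitTime α z :=
  Real.sInf_nonneg fun _ hs => hs.1

theorem hitTime_le {t z : ℝ} (ht : 0 ≤ t) (hz : z ≤ cumHaz α t) : hitTime α z ≤ t :=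
  csInf_le ⟨0, fun _ hs => hs.1⟩ ⟨ht, hz⟩

theorem nonempty_of_tendsto_cumHaz (hα : Tendsto (cumHaz α) atTop atTop) (z : ℝ) :
    {s : ℝ | 0 ≤ s ∧ z ≤ cumHaz α s}.Nonempty :=
  ((eventually_ge_atTop 0).and (hα.eventually (eventually_ge_atTop z))).exists

theorem monotone_hitTime (hα : Tendsto (cumHaz α) atTop atTop) : Monotone (hitTime α) :=
  fun _ z₂ hz => csInf_le_csInf ⟨0, fun _ hs => hs.1⟩ (nonempty_of_tendsto_cumHaz hα z₂)
    fun _ hs => ⟨hs.1, hz.trans hs.2⟩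

theorem IsHazardRate.le_hitTime (h : IsHazardRate α) {t z : ℝ} (ht : 0 ≤ t)
    (hz : cumHaz α t ≤ z) : t ≤ hitTime α z :=
  le_csInf (nonempty_of_tendsto_cumHaz h.tendsto_cumHaz z) fun _ hs => not_lt.1 fun hst =>
    (strictMonoOn_cumHaz h.pos h.continuousOn hs.1 ht hst).not_ge (hz.trans hs.2)

theorem IsHazardRate.hitTime_cumHaz (h : IsHazardRate α) {x : ℝ} (hx : 0 ≤ x) :
    hitTime α (cumHaz α x) = x :=
  (hitTime_le hx le_rfl).antisymm (h.le_hitTime hx le_rfl)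

end CumulativeHazard

theorem ofReal_integral_le_lintegral_ofReal {β : Type*} [MeasurableSpace β] {μ : Measure β}
    {f : β → ℝ} (hf : 0 ≤ᵐ[μ] f) :
    ENNReal.ofReal (∫ x, f x ∂μ) ≤ ∫⁻ x, ENNReal.ofReal (f x) ∂μ := by
  by_cases hfi : Integrable f μ
  · exact (ofReal_integral_eq_lintegral_ofReal hfi hf).le
  · simp [integral_undef hfi]

theorem lintegral_expMeasure_one (u : ℝ → ℝ≥0∞) :
    ∫⁻ z, u z ∂expMeasure 1 = ∫⁻ z in Ioi 0, ENNReal.ofReal (Real.exp (-z)) * u z := by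
  have hpdf : Measurable (gammaPDF 1 1) := (measurable_gammaPDFReal 1 1).ennreal_ofReal
  rw [expMeasure, gammaMeasure, lintegral_withDensity_eq_lintegral_mul_non_measurable _ hpdf
      (ae_of_all _ fun _ => ENNReal.ofReal_lt_top),
    setLIntegral_congr Ioi_ae_eq_Ici,
    ← setLIntegral_eq_of_support_subset (s := Ici 0)]
  · refine setLIntegral_congr_fun measurableSet_Ici fun z hz => ?_
    simp [gammaPDF_of_nonneg hz]
  · exact fun z hz => mem_Ici.2 <| not_lt.1 fun hneg => hz (by simp [gammaPDF_of_neg hneg])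

open Finset in
theorem sum_sum_filter_ne_eq_sum_filter_lt {ι M : Type*} [Fintype ι] [LinearOrder ι]
    [AddCommMonoid M] (f : ι → ι → M) :
    ∑ i, ∑ j ∈ univ.filter (· ≠ i), f i j
      = ∑ p ∈ {p ∈ (Finset.univ : Finset ι) ×ˢ Finset.univ | p.1 < p.2},
          (f p.1 p.2 + f p.2 p.1) := by
  calc ∑ i, ∑ j ∈ univ.filter (· ≠ i), f i j
      = ∑ i, ∑ j, ((if i < j then f i j else 0) + if j < i then f i j else 0) := by
        refine sum_congr rfl fun i _ => ?_
        rw [sum_filter]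
        refine sum_congr rfl fun j _ => ?_
        rcases lt_trichotomy i j with h | rfl | h
        · simp [h, h.ne', h.not_gt]
        · simp
        · simp [h, h.ne, h.not_gt]
    _ = ∑ i, ∑ j, if i < j then f i j + f j i else 0 := by
        simp only [sum_add_distrib, ite_add_zero]
        rw [sum_comm (f := fun i j => if j < i then f i j else 0)]
    _ = _ := by rw [sum_filter, sum_product]

section Probability

variable {Ω : Type*} [MeasurableSpace Ω] {P : Measure Ω} [IsProbabilityMeasure P]

theorem map_eq_expMeasure_one {X : Ω → ℝ} (hX : Measurable X)
    (htail : ∀ t : ℝ, 0 ≤ t → P {ω | t < X ω} = ENNReal.ofReal (Real.exp (-t))) :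
    P.map X = expMeasure 1 := by
  have := isProbabilityMeasure_expMeasure one_pos
  have := Measure.isProbabilityMeasure_map (μ := P) hX.aemeasurable
  have hIic : ∀ t, P (X ⁻¹' Iic t) = 1 - P {ω | t < X ω} := fun t => by
    rw [← prob_compl_eq_one_sub (measurableSet_lt measurable_const hX)]
    congr 1
    ext
    simp
  refine Measure.ext_of_Iic _ _ fun t => ?_
  rw [← ofReal_cdf (μ := expMeasure 1), cdf_expMeasure_eq one_pos,
    Measure.map_apply hX measurableSet_Iic]
  split_ifs with ht
  · rw [hIic, htail t ht, one_mul, ENNReal.ofReal_sub _ (Real.exp_pos _).le, ENNReal.ofReal_one]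
  · rw [ENNReal.ofReal_zero, ← nonpos_iff_eq_zero]
    calc P (X ⁻¹' Iic t) ≤ P (X ⁻¹' Iic 0) :=
          measure_mono (preimage_mono (Iic_subset_Iic.2 (not_le.1 ht).le))
      _ = 0 := by simp [hIic, htail 0 le_rfl]

theorem measure_le_and_le_eq_lintegral {β : Type*} [MeasurableSpace β]
    {X : Ω → β} {Y W : Ω → ℝ} (hX : Measurable X) (hY : Measurable Y) (hW : Measurable W)
    (hXYW : IndepFun X (fun ω => (Y ω, W ω)) P) (hYW : IndepFun Y W P)
    {f g : β → ℝ} (hf : Measurable f) (hg : Measurable g) :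
    P {ω | f (X ω) ≤ Y ω ∧ g (X ω) ≤ W ω}
      = ∫⁻ x, P {ω | f x ≤ Y ω} * P {ω | g x ≤ W ω} ∂P.map X := by
  set T : Set (β × ℝ × ℝ) := {p | f p.1 ≤ p.2.1 ∧ g p.1 ≤ p.2.2}
  have hT : MeasurableSet T :=
    (measurableSet_le (hf.comp measurable_fst) (measurable_fst.comp measurable_snd)).inter
      (measurableSet_le (hg.comp measurable_fst) (measurable_snd.comp measurable_snd))
  have hlaw : P.map (fun ω => (X ω, Y ω, W ω)) = (P.map X).prod ((P.map Y).prod (P.map W)) := by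
    rw [(indepFun_iff_map_prod_eq_prod_map_map hX.aemeasurable
        (hY.prodMk hW).aemeasurable).1 hXYW,
      (indepFun_iff_map_prod_eq_prod_map_map hY.aemeasurable hW.aemeasurable).1 hYW]
  calc P {ω | f (X ω) ≤ Y ω ∧ g (X ω) ≤ W ω}
        = P.map (fun ω => (X ω, Y ω, W ω)) T := by
        rw [Measure.map_apply (hX.prodMk (hY.prodMk hW)) hT]
        rfl
    _ = ∫⁻ x, (P.map Y).prod (P.map W) (Prod.mk x ⁻¹' T) ∂P.map X := by
        rw [hlaw, Measure.prod_apply hT]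
    _ = _ := lintegral_congr fun x => by
        rw [show Prod.mk x ⁻¹' T = Ici (f x) ×ˢ Ici (g x) from rfl, Measure.prod_prod,
          Measure.map_apply hY measurableSet_Ici, Measure.map_apply hW measurableSet_Ici]
        rfl

theorem ofReal_integral_le_measure_hitTime_add_le {a b c : ℝ → ℝ} (ha : IsHazardRate a)
    (hb : IsHazardRate b) (hc : IsHazardRate c) {X Y W : Ω → ℝ}
    (hX : Measurable X) (hY : Measurable Y) (hW : Measurable W)
    (hXYW : IndepFun X (fun ω => (Y ω, W ω)) P) (hYW : IndepFun Y W P)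
    (hXexp : ∀ t : ℝ, 0 ≤ t → P {ω | t < X ω} = ENNReal.ofReal (Real.exp (-t)))
    (hYexp : ∀ t : ℝ, 0 ≤ t → P {ω | t < Y ω} = ENNReal.ofReal (Real.exp (-t)))
    (hWexp : ∀ t : ℝ, 0 ≤ t → P {ω | t < W ω} = ENNReal.ofReal (Real.exp (-t)))
    {ε : ℝ} (hε : 0 ≤ ε) :
    ENNReal.ofReal (∫ x in Ioi 0,
        a x * Real.exp (-cumHaz a x - cumHaz b (x + ε) - cumHaz c (x + ε)))
      ≤ P {ω | hitTime a (X ω) + ε ≤ hitTime b (Y ω) ∧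
          hitTime a (X ω) + ε ≤ hitTime c (W ω)} := by
  have hshift : ∀ z, 0 ≤ hitTime a z + ε := fun z => add_nonneg (hitTime_nonneg a z) hε
  -- the levels `Y`, `W` must reach for `hitTime b Y`, `hitTime c W ≥ hitTime a z + ε` when `X = z`
  set φ : ℝ → ℝ := fun z => cumHaz b (hitTime a z + ε)
  set ψ : ℝ → ℝ := fun z => cumHaz c (hitTime a z + ε)
  have hmono : ∀ {d : ℝ → ℝ}, IsHazardRate d →
      Monotone fun z => cumHaz d (hitTime a z + ε) :=
    fun hd z₁ z₂ hz => (strictMonoOn_cumHaz hd.pos hd.continuousOn).monotoneOn (hshift z₁)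
      (hshift z₂) (add_le_add_left (monotone_hitTime ha.tendsto_cumHaz hz) ε)
  have htail : ∀ {V : Ω → ℝ},
      (∀ t : ℝ, 0 ≤ t → P {ω | t < V ω} = ENNReal.ofReal (Real.exp (-t))) →
      ∀ t : ℝ, 0 ≤ t → ENNReal.ofReal (Real.exp (-t)) ≤ P {ω | t ≤ V ω} :=
    fun hV t ht => (hV t ht).ge.trans (measure_mono fun _ => le_of_lt (α := ℝ))
  set k : ℝ → ℝ≥0∞ := fun z => ENNReal.ofReal (Real.exp (-z)) *
    (ENNReal.ofReal (Real.exp (-φ z)) * ENNReal.ofReal (Real.exp (-ψ z)))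
  calc ENNReal.ofReal (∫ x in Ioi 0,
        a x * Real.exp (-cumHaz a x - cumHaz b (x + ε) - cumHaz c (x + ε)))
      ≤ ∫⁻ x in Ioi 0,
        ENNReal.ofReal (a x * Real.exp (-cumHaz a x - cumHaz b (x + ε) - cumHaz c (x + ε))) :=
        ofReal_integral_le_lintegral_ofReal <| (ae_restrict_iff' measurableSet_Ioi).2 <|
          ae_of_all _ fun x hx => mul_nonneg (ha.pos x (le_of_lt hx)).le (Real.exp_pos _).le
    _ = ∫⁻ x in Ioi 0, ENNReal.ofReal (a x) * k (cumHaz a x) := by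
        refine setLIntegral_congr_fun measurableSet_Ioi fun x hx => ?_
        simp only [k, φ, ψ, ha.hitTime_cumHaz (le_of_lt hx)]
        rw [← ENNReal.ofReal_mul (Real.exp_pos _).le, ← ENNReal.ofReal_mul (Real.exp_pos _).le,
          ← ENNReal.ofReal_mul (ha.pos x (le_of_lt hx)).le, sub_eq_add_neg, sub_eq_add_neg,
          Real.exp_add, Real.exp_add, mul_assoc]
    _ ≤ ∫⁻ z in Ioi 0, k z := lintegral_comp_cumHaz_le ha.pos ha.continuousOn k
    _ = ∫⁻ z, ENNReal.ofReal (Real.exp (-φ z)) * ENNReal.ofReal (Real.exp (-ψ z))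
          ∂expMeasure 1 := (lintegral_expMeasure_one _).symm
    _ ≤ ∫⁻ z, P {ω | φ z ≤ Y ω} * P {ω | ψ z ≤ W ω} ∂P.map X := by
        rw [map_eq_expMeasure_one hX hXexp]
        gcongr with z
        exacts [htail hYexp _ (cumHaz_nonneg hb.pos (hshift z)),
          htail hWexp _ (cumHaz_nonneg hc.pos (hshift z))]
    _ = P {ω | φ (X ω) ≤ Y ω ∧ ψ (X ω) ≤ W ω} :=
        (measure_le_and_le_eq_lintegral hX hY hW hXYW hYW (hmono hb).measurable
          (hmono hc).measurable).symm
    _ ≤ _ := measure_mono fun _ h =>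
        And.intro (hb.le_hitTime (hshift _) h.1) (hc.le_hitTime (hshift _) h.2)

theorem measure_abs_sub_lt_add_le_one {s t : Ω → ℝ} (hs : Measurable s) (ht : Measurable t)
    {ε : ℝ} (hε : 0 < ε) :
    P {ω | |s ω - t ω| < ε}
      + (P {ω | s ω + ε ≤ t ω} + P {ω | t ω + ε ≤ s ω}) ≤ 1 := by
  have hG : Disjoint {ω | s ω + ε ≤ t ω} {ω | t ω + ε ≤ s ω} :=
    disjoint_left.2 fun ω (h₁ : s ω + ε ≤ t ω) (h₂ : t ω + ε ≤ s ω) => by linarith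
  have hD : Disjoint {ω | |s ω - t ω| < ε}
      ({ω | s ω + ε ≤ t ω} ∪ {ω | t ω + ε ≤ s ω}) := by
    refine disjoint_left.2 fun ω (h₁ : |s ω - t ω| < ε) h₂ => ?_
    rw [abs_sub_lt_iff] at h₁
    rcases h₂ with (h₂ : s ω + ε ≤ t ω) | (h₂ : t ω + ε ≤ s ω) <;> linarith
  have hle : ∀ {u v : Ω → ℝ}, Measurable u → Measurable v →
      MeasurableSet {ω | u ω + ε ≤ v ω} := fun hu hv => measurableSet_le (hu.add_const ε) hv
  rw [← measure_union hG (hle ht hs), ← measure_union hD ((hle hs ht).union (hle ht hs))]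
  exact prob_le_one

open Finset in
theorem measure_exists_abs_sub_lt_add_sum_le_choose {ι : Type*} [Fintype ι] [LinearOrder ι]
    {τ : ι → Ω → ℝ} (hτ : ∀ i, Measurable (τ i)) {ε : ℝ} (hε : 0 < ε) :
    P {ω | ∃ i j, i ≠ j ∧ |τ i ω - τ j ω| < ε}
        + ∑ i, ∑ j ∈ univ.filter (· ≠ i), P {ω | τ i ω + ε ≤ τ j ω}
      ≤ (Fintype.card ι).choose 2 := by
  set S : Finset (ι × ι) := {p ∈ (Finset.univ : Finset ι) ×ˢ Finset.univ | p.1 < p.2}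
  have hcover : {ω | ∃ i j, i ≠ j ∧ |τ i ω - τ j ω| < ε}
      ⊆ ⋃ p ∈ S, {ω | |τ p.1 ω - τ p.2 ω| < ε} := by
    rintro ω ⟨i, j, hij, hω⟩
    rcases hij.lt_or_gt with h | h
    · exact Set.mem_iUnion₂.2 ⟨(i, j), by simp [S, h], hω⟩
    · refine Set.mem_iUnion₂.2 ⟨(j, i), by simp [S, h], ?_⟩
      rwa [Set.mem_ofPred_eq, abs_sub_comm]
  calc _ ≤ ∑ p ∈ S, P {ω | |τ p.1 ω - τ p.2 ω| < ε} + ∑ p ∈ S,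
          (P {ω | τ p.1 ω + ε ≤ τ p.2 ω} + P {ω | τ p.2 ω + ε ≤ τ p.1 ω}) := by
        rw [sum_sum_filter_ne_eq_sum_filter_lt]
        gcongr
        exact (measure_mono hcover).trans (measure_biUnion_finset_le S _)
    _ ≤ ∑ _p ∈ S, 1 := by
        rw [← sum_add_distrib]
        exact sum_le_sum fun p _ => measure_abs_sub_lt_add_le_one (hτ _) (hτ _) hε
    _ = (Fintype.card ι).choose 2 := by
        rw [sum_const, card_product_filter_lt, card_univ, nsmul_one]

end Probability

/-- (Upper bound on the market failure probability.) For every `ε > 0`,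
`P(|τ_i − τ_j| < ε for some i ≠ j) ≤ C(K,2) − ∑_{i=1}^K ∑_{j ≠ i} ∫_0^∞ α_i(x)
  e^{−A_i(x) − A_j(x+ε) − A_0(x+ε)} dx`. -/
theorem market_failure_probability_upper_bound
    {Ω : Type*} [MeasurableSpace Ω] (P : Measure Ω) [IsProbabilityMeasure P]
    (K : ℕ) (Z : Fin (K + 1) → Ω → ℝ) (α : Fin (K + 1) → ℝ → ℝ)
    (hZmeas : ∀ i, Measurable (Z i))
    (hZindep : iIndepFun Z P)
    (hZexp : ∀ i, ∀ t : ℝ, 0 ≤ t → P {ω | t < Z i ω} = ENNReal.ofReal (Real.exp (-t)))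
    (hαpos : ∀ i t, 0 ≤ t → 0 < α i t)
    (hαcont : ∀ i, ContinuousOn (α i) (Set.Ici 0))
    (hAinf : ∀ i, Filter.Tendsto (cumHaz (α i)) Filter.atTop Filter.atTop)
    (ε : ℝ) (hε : 0 < ε) :
    P {ω | ∃ i j : Fin K, i ≠ j ∧
        |min (hitTime (α 0) (Z 0 ω)) (hitTime (α i.succ) (Z i.succ ω))
          - min (hitTime (α 0) (Z 0 ω)) (hitTime (α j.succ) (Z j.succ ω))| < ε}
      ≤ ENNReal.ofReal ((K.choose 2 : ℝ)
          - ∑ i : Fin K, ∑ j ∈ Finset.univ.filter (fun j : Fin K => j ≠ i),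
              ∫ x in Set.Ioi (0 : ℝ), α i.succ x *
                Real.exp (-cumHaz (α i.succ) x - cumHaz (α j.succ) (x + ε)
                  - cumHaz (α 0) (x + ε))) := by
  have hα : ∀ k, IsHazardRate (α k) := fun k => ⟨hαpos k, hαcont k, hAinf k⟩
  set τ : Fin K → Ω → ℝ := fun i ω =>
    min (hitTime (α 0) (Z 0 ω)) (hitTime (α i.succ) (Z i.succ ω))
  have hτ : ∀ i, Measurable (τ i) := fun i =>
    ((monotone_hitTime (hAinf 0)).measurable.comp (hZmeas 0)).min
      ((monotone_hitTime (hAinf i.succ)).measurable.comp (hZmeas i.succ))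
  set I : Fin K → Fin K → ℝ := fun i j => ∫ x in Set.Ioi (0 : ℝ), α i.succ x *
    Real.exp (-cumHaz (α i.succ) x - cumHaz (α j.succ) (x + ε) - cumHaz (α 0) (x + ε))
  have hI_nonneg : ∀ i j, 0 ≤ I i j := fun i j => setIntegral_nonneg measurableSet_Ioi
    fun x hx => mul_nonneg (hαpos _ x (le_of_lt hx)).le (Real.exp_pos _).le
  have hI_le : ∀ i, ∀ j ∈ Finset.univ.filter (· ≠ i),
      ENNReal.ofReal (I i j) ≤ P {ω | τ i ω + ε ≤ τ j ω} := fun i j hj => by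
    have hji : j.succ ≠ i.succ := Fin.succ_injective _ |>.ne (Finset.mem_filter.1 hj).2
    refine (ofReal_integral_le_measure_hitTime_add_le (hα _) (hα _) (hα 0) (hZmeas _) (hZmeas _)
      (hZmeas 0) (hZindep.indepFun_prodMk hZmeas _ _ _ hji (Fin.succ_ne_zero i).symm).symm
      (hZindep.indepFun (Fin.succ_ne_zero j)) (hZexp _) (hZexp _) (hZexp 0) hε.le).trans
      (measure_mono fun ω h => ?_)
    exact (add_le_add_left (min_le_right _ _) ε).trans (le_min h.2 h.1)
  have hbound := measure_exists_abs_sub_lt_add_sum_le_choose (P := P) hτ hε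
  rw [Fintype.card_fin] at hbound
  have hrow : ∀ i, 0 ≤ ∑ j ∈ Finset.univ.filter (· ≠ i), I i j :=
    fun i => Finset.sum_nonneg fun j _ => hI_nonneg i j
  rw [ENNReal.ofReal_sub _ (Finset.sum_nonneg fun i _ => hrow i), ENNReal.ofReal_natCast,
    ENNReal.ofReal_sum_of_nonneg fun i _ => hrow i]
  simp_rw [ENNReal.ofReal_sum_of_nonneg fun j _ => hI_nonneg _ j]
  calc _ ≤ (K.choose 2 : ℝ≥0∞)
        - ∑ i, ∑ j ∈ Finset.univ.filter (· ≠ i), P {ω | τ i ω + ε ≤ τ j ω} :=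
        ENNReal.le_sub_of_add_le_right (ne_top_of_le_ne_top (ENNReal.natCast_ne_top _)
          (le_add_self.trans hbound)) hbound
    _ ≤ _ := by gcongr with i _ j hj; exact hI_le i j hj
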